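/- arXiv:1104.5646 — 3 statements merged into one kernel-verified Lean document; each statement's English description precedes it below -/
import Mathlib

section
/- Let p ≤ q be integers that are both even. Then the block matrix M_{ρ(p,q)} of the string representation ρ(p,q) is injective and its cokernel has dimension 1 over κ. -/
open Module

/-- A representation of the cyclic quiver `G_{2m}`: `W i` is the odd vertex space `V_{2i+1}`
(0-based, so `W 0 = V_1`), `U i` is the even vertex space `V_{2i+2}`,
`α i : V_{2i+1} → V_{2i+2}` and `β i : V_{2i+3} → V_{2i+2}` (indices of vertices mod `2m`). -/
structure QRep (κ : Type) [Field κ] (m : ℕ) [NeZero m] where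
  W : Fin m → Type
  U : Fin m → Type
  [accW : ∀ i, AddCommGroup (W i)]
  [accU : ∀ i, AddCommGroup (U i)]
  [modW : ∀ i, Module κ (W i)]
  [modU : ∀ i, Module κ (U i)]
  [fdW : ∀ i, FiniteDimensional κ (W i)]
  [fdU : ∀ i, FiniteDimensional κ (U i)]
  α : ∀ i, W i →ₗ[κ] U i
  β : ∀ i, W (i + 1) →ₗ[κ] U i

attribute [instance] QRep.accW QRep.accU QRep.modW QRep.modU QRep.fdW QRep.fdU

namespace QRep

variable {κ : Type} [Field κ] {m : ℕ} [NeZero m]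

/-- The block matrix `M_ρ : ⊕ V_{2i-1} → ⊕ V_{2i}`,
`M_ρ(v₁, v₃, …) = (α₁v₁ − β₁v₃, α₂v₃ − β₂v₅, …, α_m v_{2m−1} − β_m v₁)`. -/
def blockMap (ρ : QRep κ m) : (∀ i, ρ.W i) →ₗ[κ] ∀ i, ρ.U i :=
  LinearMap.pi fun i => (ρ.α i).comp (LinearMap.proj i) - (ρ.β i).comp (LinearMap.proj (i + 1))

/-- Direct sum of two representations. -/
def dsum (ρ σ : QRep κ m) : QRep κ m where
  W i := ρ.W i × σ.W i
  U i := ρ.U i × σ.U i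
  α i := (ρ.α i).prodMap (σ.α i)
  β i := (ρ.β i).prodMap (σ.β i)

/-- Direct sum of a finite family of representations. -/
def dsumFin {N : ℕ} (f : Fin N → QRep κ m) : QRep κ m where
  W i := ∀ j, (f j).W i
  U i := ∀ j, (f j).U i
  α i := LinearMap.pi fun j => ((f j).α i).comp (LinearMap.proj j)
  β i := LinearMap.pi fun j => ((f j).β i).comp (LinearMap.proj j)

/-- An isomorphism of representations. -/
structure Iso (ρ σ : QRep κ m) where
  φW : ∀ i, ρ.W i ≃ₗ[κ] σ.W i
  φU : ∀ i, ρ.U i ≃ₗ[κ] σ.U i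
  commα : ∀ i x, φU i (ρ.α i x) = σ.α i (φW i x)
  commβ : ∀ i x, φU i (ρ.β i x) = σ.β i (φW (i + 1) x)

def IsIsomorphic (ρ σ : QRep κ m) : Prop := Nonempty (Iso ρ σ)

/-- A representation is nontrivial if some vertex space is nonzero. -/
def NontrivialRep (ρ : QRep κ m) : Prop :=
  (∃ i, Nontrivial (ρ.W i)) ∨ (∃ i, Nontrivial (ρ.U i))

/-- A representation is indecomposable if it is nontrivial and not isomorphic to a direct
sum of two nontrivial representations. -/
def Indecomposable (ρ : QRep κ m) : Prop :=
  ρ.NontrivialRep ∧ ∀ σ τ : QRep κ m, σ.NontrivialRep → τ.NontrivialRep →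
    ¬ ρ.IsIsomorphic (σ.dsum τ)

end QRep

namespace QRep

open Fin.NatCast Fin.CommRing

variable {κ : Type} [Field κ] {m : ℕ} [NeZero m]

/-- Transport of an odd vertex space along an equality of indices (linear map version). -/
def castW (ρ : QRep κ m) {a b : Fin m} (h : a = b) : ρ.W a →ₗ[κ] ρ.W b := by
  subst h; exact LinearMap.id

/-- Transport of an odd vertex space along an equality of indices (equiv version). -/
def castWE (ρ : QRep κ m) {a b : Fin m} (h : a = b) : ρ.W a ≃ₗ[κ] ρ.W b := by
  subst h; exact LinearEquiv.refl κ _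

/-- Iterated composite of the maps `g i : W i → W (i+1)`, `n` steps starting at vertex `i`. -/
def cyclicComp (ρ : QRep κ m) (g : ∀ i, ρ.W i →ₗ[κ] ρ.W (i + 1)) :
    (n : ℕ) → ∀ i : Fin m, ρ.W i →ₗ[κ] ρ.W (i + (n : Fin m))
  | 0, i => ρ.castW (by simp)
  | n + 1, i =>
      (ρ.castW (show i + (n : Fin m) + 1 = i + ((n + 1 : ℕ) : Fin m) by push_cast; ring)).comp
        ((g (i + (n : Fin m))).comp (cyclicComp ρ g n i))

/-- The monodromy `T = β_m⁻¹ ∘ α_m ∘ ⋯ ∘ β_1⁻¹ ∘ α_1 : V_1 → V_1`, where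
`g i = β i⁻¹ ∘ α i` is given as data. -/
def monodromy (ρ : QRep κ m) (g : ∀ i, ρ.W i →ₗ[κ] ρ.W (i + 1)) : ρ.W 0 →ₗ[κ] ρ.W 0 :=
  (ρ.castW (show (0 : Fin m) + (m : Fin m) = 0 by simp [Fin.natCast_self])).comp
    (cyclicComp ρ g m 0)

/-- Iterated composite of the equivalences `e i : W i ≃ W (i+1)`, `n` steps starting at `i`. -/
def cyclicCompE (ρ : QRep κ m) (e : ∀ i, ρ.W i ≃ₗ[κ] ρ.W (i + 1)) :
    (n : ℕ) → ∀ i : Fin m, ρ.W i ≃ₗ[κ] ρ.W (i + (n : Fin m))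
  | 0, i => ρ.castWE (by simp)
  | n + 1, i =>
      ((cyclicCompE ρ e n i).trans (e (i + (n : Fin m)))).trans
        (ρ.castWE (show i + (n : Fin m) + 1 = i + ((n + 1 : ℕ) : Fin m) by push_cast; ring))

/-- `T_i`, the monodromy based at the odd vertex `V_{2i+1}` (so `Ti e 0` is `T_m = T`). -/
def Ti (ρ : QRep κ m) (e : ∀ i, ρ.W i ≃ₗ[κ] ρ.W (i + 1)) (i : Fin m) : ρ.W i ≃ₗ[κ] ρ.W i :=
  (cyclicCompE ρ e m i).trans (ρ.castWE (show i + (m : Fin m) = i by simp [Fin.natCast_self]))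

/-- `C_i = g_i ∘ ⋯ ∘ g_1 : V_1 → V_{2i+1}`. -/
def Ci (ρ : QRep κ m) (e : ∀ i, ρ.W i ≃ₗ[κ] ρ.W (i + 1)) (i : Fin m) : ρ.W 0 ≃ₗ[κ] ρ.W i :=
  (cyclicCompE ρ e (i : ℕ) 0).trans
    (ρ.castWE (show (0 : Fin m) + ((i : ℕ) : Fin m) = i by simp [Fin.cast_val_eq_self]))

end QRep

/-- Index set of the basis vectors `e_l`, `p ≤ l ≤ q`, `l ≡ j (mod 2m)`,
of a vertex space of the string representation `ρ(p,q)`. -/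
noncomputable def strIdx (m : ℕ) (p q : ℤ) (j : ZMod (2 * m)) : Finset ℤ :=
  (Finset.Icc p q).filter fun l => ((l : ZMod (2 * m)) = j)

/-- The linear map sending the basis vector `e_l` (`l ∈ T`) to the coordinate `l + d` (if present):
in matrix terms, the map whose `(l', l)` entry is `1` iff `l' + d = l`. -/
def eMap (κ : Type) [Field κ] (S T : Finset ℤ) (d : ℤ) : (S → κ) →ₗ[κ] T → κ where
  toFun f l := if h : ((l : ℤ) + d) ∈ S then f ⟨(l : ℤ) + d, h⟩ else 0
  map_add' f g := by
    funext l
    by_cases h : ((l : ℤ) + d) ∈ S <;> simp [h]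
  map_smul' c f := by
    funext l
    by_cases h : ((l : ℤ) + d) ∈ S <;> simp [h]

/-- The string representation `ρ(p,q)`: the vertex space at vertex `j` has basis
`{e_l : p ≤ l ≤ q, l ≡ j (mod 2m)}`, `α` sends `e_l` to `e_{l+1}` if `l+1 ≤ q` (else `0`),
and `β` sends `e_l` to `e_{l−1}` if `l−1 ≥ p` (else `0`). -/
noncomputable def strRep (κ : Type) [Field κ] (m : ℕ) [NeZero m] (p q : ℤ) : QRep κ m where
  W i := strIdx m p q ((2 * (i : ℕ) + 1 : ℕ)) → κ
  U i := strIdx m p q ((2 * (i : ℕ) + 2 : ℕ)) → κ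
  α _ := eMap κ _ _ (-1)
  β _ := eMap κ _ _ 1

/-- The `k × k` Jordan block `J(λ,k)`: `λ` on the diagonal, `1` on the superdiagonal. -/
def jordanMatrix (κ : Type) [Field κ] (lam : κ) (k : ℕ) : Matrix (Fin k) (Fin k) κ :=
  Matrix.of fun a b => if b = a then lam else if (b : ℕ) = (a : ℕ) + 1 then (1 : κ) else 0

/-- The Jordan-cell representation `ρ^J(λ,k)`: every vertex space is `κ^k`, `α_1 = J(λ,k)`,
and all other maps are the identity. -/
def jordanRep (κ : Type) [Field κ] (m : ℕ) [NeZero m] (lam : κ) (k : ℕ) : QRep κ m where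
  W _ := Fin k → κ
  U _ := Fin k → κ
  α i := if i = 0 then (jordanMatrix κ lam k).mulVecLin else LinearMap.id
  β _ := LinearMap.id


/-! The basis vectors `e_l` of `ρ(p,q)` with `l` odd sit at the odd vertices, those with `l` even
at the even ones. The coordinate of `M v` at an even index `l + 1 ≤ q` is `v_l - v_{l+2}` (with
`v_{l+2} = 0` when `l + 2 > q`), so a vector in the kernel vanishes by downward induction from
`q`. Since `p` and `q` are even, `[p, q]` contains one more even than odd integer, so the
cokernel is one-dimensional. -/

open Finset

lemma mem_strIdx {m : ℕ} {p q l : ℤ} {j : ℕ} :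
    l ∈ strIdx m p q j ↔ p ≤ l ∧ l ≤ q ∧ (2 * m : ℤ) ∣ l - j := by
  unfold strIdx
  rw [mem_filter, mem_Icc, and_assoc]
  refine and_congr_right fun _ => and_congr_right fun _ => ?_
  rw [← Int.cast_natCast, ZMod.intCast_eq_intCast_iff, Int.modEq_iff_dvd, dvd_sub_comm]
  push_cast
  rfl

lemma pairwise_disjoint_strIdx {m : ℕ} (p q : ℤ) (c : ℕ) :
    Pairwise fun i j : Fin m =>
      Disjoint (strIdx m p q ((2 * (i : ℕ) + c : ℕ))) (strIdx m p q ((2 * (j : ℕ) + c : ℕ))) := by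
  intro i j hij
  refine disjoint_left.mpr fun l hi hj => hij (Fin.ext ?_)
  have hd : (2 * m : ℤ) ∣ 2 * (j : ℕ) - 2 * (i : ℕ) := by
    have := dvd_sub (mem_strIdx.mp hi).2.2 (mem_strIdx.mp hj).2.2
    rwa [show l - ((2 * (i : ℕ) + c : ℕ) : ℤ) - (l - ((2 * (j : ℕ) + c : ℕ) : ℤ))
      = 2 * (j : ℕ) - 2 * (i : ℕ) by push_cast; ring] at this
  have := Int.eq_zero_of_abs_lt_dvd hd (by rw [abs_lt]; omega)
  omega

lemma biUnion_strIdx {m : ℕ} [NeZero m] (p q : ℤ) (c : ℕ) :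
    univ.biUnion (fun i : Fin m => strIdx m p q ((2 * (i : ℕ) + c : ℕ)))
      = {l ∈ Icc p q | Even (l - (c : ℤ))} := by
  ext l
  simp only [mem_biUnion, mem_univ, true_and, mem_filter, mem_Icc, mem_strIdx]
  constructor
  · rintro ⟨i, hpl, hlq, hdvd⟩
    refine ⟨⟨hpl, hlq⟩, even_iff_two_dvd.mpr ?_⟩
    obtain ⟨t, ht⟩ := hdvd
    exact ⟨m * t + i, by push_cast at ht; linarith⟩
  · rintro ⟨⟨hpl, hlq⟩, k, hk⟩
    have hm : (0 : ℤ) < m := by exact_mod_cast Nat.pos_of_ne_zero (NeZero.ne m)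
    have hdiv := Int.emod_add_mul_ediv k m
    have hlo := Int.emod_nonneg k hm.ne'
    have hhi := Int.emod_lt_of_pos k hm
    -- the vertex is `i = k % m`, since `l - (2 i + c) = 2 m (k / m)`
    refine ⟨⟨(k % m).toNat, by omega⟩, hpl, hlq, k / m, ?_⟩
    push_cast
    rw [Int.toNat_of_nonneg hlo]
    linarith

lemma finrank_pi_strIdx (κ : Type) [Field κ] {m : ℕ} [NeZero m] (p q : ℤ) (c : ℕ) :
    finrank κ (∀ i : Fin m, strIdx m p q ((2 * (i : ℕ) + c : ℕ)) → κ)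
      = #{l ∈ Icc p q | Even (l - (c : ℤ))} := by
  rw [Module.finrank_pi_fintype, ← biUnion_strIdx (m := m) p q c,
    card_biUnion ((pairwise_disjoint_strIdx p q c).set_pairwise _)]
  simp only [Module.finrank_fintype_fun_eq_card, Fintype.card_coe]

lemma card_filter_even_Icc {p q : ℤ} (hpq : p ≤ q) (hp : Even p) (hq : Even q) :
    #{l ∈ Icc p q | Even l} = #{l ∈ Icc p q | Odd l} + 1 := by
  have hsplit : {l ∈ Icc p q | Even l}
      = insert p ({l ∈ Icc p q | Odd l}.map (addRightEmbedding 1)) := by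
    ext l
    simp only [mem_filter, mem_Icc, mem_insert, mem_map, addRightEmbedding_apply,
      Int.even_iff, Int.odd_iff] at hp hq ⊢
    constructor
    · rintro ⟨⟨hpl, hlq⟩, hl⟩
      by_cases hlp : l = p
      · exact .inl hlp
      · exact .inr ⟨l - 1, ⟨⟨by omega, by omega⟩, by omega⟩, by omega⟩
    · rintro (rfl | ⟨a, ⟨⟨hpa, haq⟩, ha⟩, rfl⟩) <;> omega
  rw [hsplit, card_insert_of_notMem, card_map]
  simp only [mem_map, mem_filter, mem_Icc, addRightEmbedding_apply, not_exists, not_and]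
  omega

section StringRepresentation

variable {κ : Type} [Field κ] {m : ℕ} [NeZero m] {p q : ℤ}

lemma finrank_strRep_W : finrank κ (∀ i, (strRep κ m p q).W i) = #{l ∈ Icc p q | Odd l} :=
  (finrank_pi_strIdx κ (m := m) p q 1).trans
    (by simp only [Nat.cast_one, Int.even_sub_one, Int.not_even_iff_odd])

lemma finrank_strRep_U : finrank κ (∀ i, (strRep κ m p q).U i) = #{l ∈ Icc p q | Even l} :=
  (finrank_pi_strIdx κ (m := m) p q 2).trans (by simp only [Nat.cast_ofNat, even_sub_two])

lemma strRep_blockMap_apply (f : ∀ i : Fin m, strIdx m p q ((2 * (i : ℕ) + 1 : ℕ)) → κ)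
    (i : Fin m) (y : strIdx m p q ((2 * (i : ℕ) + 2 : ℕ))) :
    (strRep κ m p q).blockMap f i y
      = (if h : (y : ℤ) + -1 ∈ strIdx m p q ((2 * (i : ℕ) + 1 : ℕ)) then
            f i ⟨y + -1, h⟩ else 0)
        - if h : (y : ℤ) + 1 ∈ strIdx m p q ((2 * ((i + 1 : Fin m) : ℕ) + 1 : ℕ)) then
            f (i + 1) ⟨y + 1, h⟩ else 0 :=
  rfl

lemma strRep_apply_eq_of_blockMap_eq_zero (hq : Even q)
    {f : ∀ i : Fin m, strIdx m p q ((2 * (i : ℕ) + 1 : ℕ)) → κ}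
    (hf : (strRep κ m p q).blockMap f = 0) (i : Fin m)
    (x : strIdx m p q ((2 * (i : ℕ) + 1 : ℕ))) :
    f i x = if h : (x : ℤ) + 2 ∈ strIdx m p q ((2 * ((i + 1 : Fin m) : ℕ) + 1 : ℕ)) then
      f (i + 1) ⟨x + 2, h⟩ else 0 := by
  obtain ⟨hpx, hxq, t, ht⟩ := mem_strIdx.mp x.2
  -- `x` is odd and `q` is even, so `x + 1 ≤ q` is again a basis index
  have hx1 : (x : ℤ) + 1 ∈ strIdx m p q ((2 * (i : ℕ) + 2 : ℕ)) := by
    have hxodd : Odd (x : ℤ) := ⟨i + m * t, by push_cast at ht; linarith⟩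
    obtain ⟨r, hr⟩ := hq
    obtain ⟨s, hs⟩ := hxodd
    refine mem_strIdx.mpr ⟨by omega, by omega, t, ?_⟩
    push_cast at ht ⊢; linarith
  have h : (strRep κ m p q).blockMap f i ⟨x + 1, hx1⟩ = 0 := by rw [hf]; rfl
  rw [strRep_blockMap_apply, sub_eq_zero] at h
  simp only [add_assoc, add_neg_cancel, add_zero, one_add_one_eq_two, coe_mem, dite_true,
    Subtype.coe_eta] at h
  exact h

lemma strRep_blockMap_injective (hq : Even q) : Function.Injective (strRep κ m p q).blockMap := by
  rw [← LinearMap.ker_eq_bot, LinearMap.ker_eq_bot']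
  intro f hf
  have vanish : ∀ (n : ℕ) (i : Fin m) (x : strIdx m p q ((2 * (i : ℕ) + 1 : ℕ))),
      q < (x : ℤ) + 2 * n → f i x = 0 := by
    intro n
    induction n with
    | zero => exact fun i x hx => absurd (mem_strIdx.mp x.2).2.1 (by omega)
    | succ n ih =>
      intro i x hx
      rw [strRep_apply_eq_of_blockMap_eq_zero hq hf]
      split_ifs with h
      · exact ih _ _ (by push_cast at hx ⊢; omega)
      · rfl
  funext i x
  exact vanish ((q - x).toNat + 1) i x (by omega)

end StringRepresentation

/-- For `p ≤ q` both even, the block matrix of the string representation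
`ρ(p,q)` is injective and its cokernel is one-dimensional. -/
theorem strRep_blockMap_even_even {κ : Type} [Field κ] {m : ℕ} [NeZero m]
    (p q : ℤ) (hpq : p ≤ q) (hp : Even p) (hq : Even q) :
    Function.Injective (strRep κ m p q).blockMap ∧
    finrank κ ((∀ i, (strRep κ m p q).U i) ⧸ LinearMap.range (strRep κ m p q).blockMap) = 1 := by
  have hinj : Function.Injective (strRep κ m p q).blockMap := strRep_blockMap_injective hq
  refine ⟨hinj, ?_⟩
  have hrank := Submodule.finrank_quotient_add_finrank (LinearMap.range (strRep κ m p q).blockMap)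
  rw [LinearMap.finrank_range_of_inj hinj, finrank_strRep_U, finrank_strRep_W,
    card_filter_even_Icc hpq hp hq] at hrank
  omega
end

section
/- For every λ ∈ κ with λ ≠ 0 and every integer k ≥ 1, the representation ρ^J(λ,k) of the cyclic quiver G_{2m} is indecomposable. -/
open Module

/-!
An isomorphism `ρ^J(λ,k) ≅ σ ⊕ τ` turns the projection onto `σ` into an idempotent endomorphism
of `ρ^J(λ,k)`. As every structure map except `α_1` is the identity, an endomorphism acts by one
and the same matrix `E` at every vertex, and `E` commutes with `J(λ,k)`, hence with the nilpotent
shift `J(λ,k) - λ`, whose kernel is a line. The image and the kernel of `E` are shift-invariant,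
so each of them, if nonzero, contains that line; they cannot both do so, hence `E = 0` or `E = 1`
and `σ` or `τ` is trivial.
-/

theorem Module.End.exists_pow_apply_ne_zero_and_apply_eq_zero {R M : Type*} [Semiring R]
    [AddCommMonoid M] [Module R M] {N : Module.End R M} (hN : IsNilpotent N) {w : M}
    (hw : w ≠ 0) : ∃ j, (N ^ j) w ≠ 0 ∧ N ((N ^ j) w) = 0 := by
  classical
  obtain ⟨n, hn⟩ := hN
  have hex : ∃ j, (N ^ j) w = 0 := ⟨n, by simp [hn]⟩
  have hpos : Nat.find hex ≠ 0 := fun h => hw (by simpa [h] using Nat.find_spec hex)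
  refine ⟨Nat.find hex - 1, Nat.find_min hex (by omega), ?_⟩
  rw [← Module.End.mul_apply, ← pow_succ', Nat.sub_add_cancel (Nat.pos_of_ne_zero hpos)]
  exact Nat.find_spec hex

theorem IsIdempotentElem.eq_zero_or_eq_one_of_commute_of_isNilpotent {K V : Type*}
    [DivisionRing K] [AddCommGroup V] [Module K V] {E N : Module.End K V}
    (hE : IsIdempotentElem E) (hN : IsNilpotent N) (hker : (LinearMap.ker N).IsPrincipal)
    (hEN : Commute E N) : E = 0 ∨ E = 1 := by
  by_contra! h
  obtain ⟨x, hx⟩ : ∃ x, E x ≠ 0 := by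
    by_contra! hx
    exact h.1 (LinearMap.ext hx)
  obtain ⟨y, hy⟩ : ∃ y, y - E y ≠ 0 := by
    by_contra! hy
    exact h.2 (LinearMap.ext fun y => (sub_eq_zero.mp (hy y)).symm)
  obtain ⟨j, hj, hNj⟩ := Module.End.exists_pow_apply_ne_zero_and_apply_eq_zero hN hx
  obtain ⟨j', hj', hNj'⟩ := Module.End.exists_pow_apply_ne_zero_and_apply_eq_zero hN hy
  set u := (N ^ j) (E x)
  set u' := (N ^ j') (y - E y)
  have hEu : E u = u := by
    rw [← Module.End.mul_apply, (hEN.pow_right j).eq, Module.End.mul_apply,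
      ← Module.End.mul_apply E E, hE.eq]
  have hEu' : E u' = 0 := by
    rw [← Module.End.mul_apply, (hEN.pow_right j').eq, Module.End.mul_apply, map_sub,
      ← Module.End.mul_apply E E, hE.eq, sub_self, map_zero]
  obtain ⟨a, ha⟩ := (Submodule.IsPrincipal.mem_iff_eq_smul_generator _).mp
    (LinearMap.mem_ker.mpr hNj)
  obtain ⟨b, hb⟩ := (Submodule.IsPrincipal.mem_iff_eq_smul_generator _).mp
    (LinearMap.mem_ker.mpr hNj')
  have ha0 : a ≠ 0 := by rintro rfl; exact hj (by simpa using ha)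
  have hu' : u' = (b * a⁻¹) • u := by rw [ha, hb, smul_smul, inv_mul_cancel_right₀ ha0]
  apply hj'
  rw [← hEu', hu', map_smul, hEu]

theorem LinearMap.subsingleton_of_prodMap_id_zero_eq_zero {R A B : Type*} [Semiring R]
    [AddCommMonoid A] [AddCommMonoid B] [Module R A] [Module R B]
    (h : (LinearMap.id.prodMap 0 : Module.End R (A × B)) = 0) : Subsingleton A :=
  have hA (x : A) : x = 0 := by simpa using congr(($h (x, 0)).1)
  ⟨fun x y => (hA x).trans (hA y).symm⟩

theorem LinearMap.subsingleton_of_prodMap_id_zero_eq_one {R A B : Type*} [Semiring R]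
    [AddCommMonoid A] [AddCommMonoid B] [Module R A] [Module R B]
    (h : (LinearMap.id.prodMap 0 : Module.End R (A × B)) = 1) : Subsingleton B :=
  have hB (y : B) : 0 = y := by simpa using congr(($h (0, y)).2)
  ⟨fun x y => (hB x).symm.trans (hB y)⟩

theorem Fin.apply_eq_apply_zero_of_apply_add_one {α : Type*} {m : ℕ} [NeZero m] (f : Fin m → α)
    (h : ∀ i, i ≠ 0 → f (i + 1) = f i) (i : Fin m) : f i = f 0 := by
  obtain ⟨n, rfl⟩ := Nat.exists_eq_succ_of_ne_zero (NeZero.ne m)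
  induction i using Fin.reverseInduction with
  | last =>
    by_cases hn : Fin.last n = 0
    · rw [hn]
    · rw [← h _ hn, Fin.last_add_one]
  | cast i ih =>
    by_cases hi : i.castSucc = 0
    · rw [hi]
    · rw [← h _ hi, Fin.coeSucc_eq_succ, ih]

namespace QRep

variable {κ : Type} [Field κ] {m : ℕ} [NeZero m]

structure Hom (ρ σ : QRep κ m) where
  fW : ∀ i, ρ.W i →ₗ[κ] σ.W i
  fU : ∀ i, ρ.U i →ₗ[κ] σ.U i
  commα : ∀ i x, fU i (ρ.α i x) = σ.α i (fW i x)
  commβ : ∀ i x, fU i (ρ.β i x) = σ.β i (fW (i + 1) x)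

def Iso.conj {ρ σ : QRep κ m} (F : Iso ρ σ) (f : Hom σ σ) : Hom ρ ρ where
  fW i := (F.φW i).symm.conjRingEquiv (f.fW i)
  fU i := (F.φU i).symm.conjRingEquiv (f.fU i)
  commα i x := by
    simp only [LinearEquiv.conjRingEquiv_apply_apply, LinearEquiv.symm_symm]
    rw [F.commα, f.commα, LinearEquiv.symm_apply_eq, F.commα, LinearEquiv.apply_symm_apply]
  commβ i x := by
    simp only [LinearEquiv.conjRingEquiv_apply_apply, LinearEquiv.symm_symm]
    rw [F.commβ, f.commβ, LinearEquiv.symm_apply_eq, F.commβ, LinearEquiv.apply_symm_apply]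

def dsumProjFst (σ τ : QRep κ m) : Hom (σ.dsum τ) (σ.dsum τ) where
  fW _ := LinearMap.id.prodMap 0
  fU _ := LinearMap.id.prodMap 0
  commα i _ := Prod.ext rfl (map_zero (τ.α i)).symm
  commβ i _ := Prod.ext rfl (map_zero (τ.β i)).symm

theorem indecomposable_of_forall_isIdempotentElem {ρ : QRep κ m} (hρ : ρ.NontrivialRep)
    (h : ∀ e : Hom ρ ρ, (∀ i, IsIdempotentElem (e.fW i)) → (∀ i, IsIdempotentElem (e.fU i)) →
      (∀ i, e.fW i = 0 ∧ e.fU i = 0) ∨ (∀ i, e.fW i = 1 ∧ e.fU i = 1)) :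
    ρ.Indecomposable := by
  refine ⟨hρ, fun σ τ hσ hτ ⟨F⟩ => ?_⟩
  have hP {A B : Type} [AddCommGroup A] [AddCommGroup B] [Module κ A] [Module κ B] :
      IsIdempotentElem (LinearMap.id.prodMap 0 : Module.End κ (A × B)) := by
    ext <;> simp
  rcases h (F.conj (dsumProjFst σ τ)) (fun i => hP.map _) (fun i => hP.map _) with h0 | h1
  · rcases hσ with ⟨i, hi⟩ | ⟨i, hi⟩
    · exact not_subsingleton _ (LinearMap.subsingleton_of_prodMap_id_zero_eq_zero
        ((map_eq_zero_iff _ (F.φW i).symm.conjRingEquiv.injective).mp (h0 i).1))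
    · exact not_subsingleton _ (LinearMap.subsingleton_of_prodMap_id_zero_eq_zero
        ((map_eq_zero_iff _ (F.φU i).symm.conjRingEquiv.injective).mp (h0 i).2))
  · rcases hτ with ⟨i, hi⟩ | ⟨i, hi⟩
    · exact not_subsingleton _ (LinearMap.subsingleton_of_prodMap_id_zero_eq_one
        ((map_eq_one_iff _ (F.φW i).symm.conjRingEquiv.injective).mp (h1 i).1))
    · exact not_subsingleton _ (LinearMap.subsingleton_of_prodMap_id_zero_eq_one
        ((map_eq_one_iff _ (F.φU i).symm.conjRingEquiv.injective).mp (h1 i).2))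

end QRep

def jordanShift (κ : Type) [Field κ] (k : ℕ) : Module.End κ (Fin k → κ) where
  toFun v a := if h : (a : ℕ) + 1 < k then v ⟨a + 1, h⟩ else 0
  map_add' v w := by ext a; by_cases h : (a : ℕ) + 1 < k <;> simp [h]
  map_smul' c v := by ext a; by_cases h : (a : ℕ) + 1 < k <;> simp [h]

section jordanShift

variable {κ : Type} [Field κ] {k : ℕ}

theorem jordanShift_pow_apply (j : ℕ) (v : Fin k → κ) (a : Fin k) :
    (jordanShift κ k ^ j) v a = if h : (a : ℕ) + j < k then v ⟨a + j, h⟩ else 0 := by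
  induction j generalizing v with
  | zero => simp
  | succ j ih =>
    rw [pow_succ, Module.End.mul_apply, ih]
    simp only [jordanShift, LinearMap.coe_mk, AddHom.coe_mk]
    split_ifs <;> first | rfl | omega

theorem isNilpotent_jordanShift : IsNilpotent (jordanShift κ k) :=
  ⟨k, LinearMap.ext fun v => funext fun a => by simp [jordanShift_pow_apply]⟩

theorem ker_jordanShift (hk : 0 < k) :
    LinearMap.ker (jordanShift κ k) = κ ∙ Pi.single ⟨0, hk⟩ 1 := by
  ext v
  rw [LinearMap.mem_ker, Submodule.mem_span_singleton]
  constructor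
  · intro hv
    refine ⟨v ⟨0, hk⟩, funext fun a => ?_⟩
    rcases a with ⟨_ | a, ha⟩
    · simp
    · have := congr_fun hv ⟨a, by omega⟩
      simp only [jordanShift, LinearMap.coe_mk, AddHom.coe_mk, dif_pos ha] at this
      simp [this]
  · rintro ⟨c, rfl⟩
    ext a
    simp [jordanShift, Fin.ext_iff]

theorem mulVecLin_jordanMatrix (lam : κ) :
    (jordanMatrix κ lam k).mulVecLin = lam • 1 + jordanShift κ k := by
  ext b a
  simp [jordanMatrix, jordanShift, Pi.single_apply]
  grind

theorem commute_jordanShift_of_commute_mulVecLin_jordanMatrix {lam : κ}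
    {E : Module.End κ (Fin k → κ)} (h : Commute E (jordanMatrix κ lam k).mulVecLin) :
    Commute E (jordanShift κ k) := by
  rw [mulVecLin_jordanMatrix] at h
  simpa using h.sub_right ((Commute.one_right E).smul_right lam)

end jordanShift

section jordanRep

variable {κ : Type} [Field κ] {m : ℕ} [NeZero m] {lam : κ} {k : ℕ}

theorem jordanRep_nontrivialRep (hk : 0 < k) : (jordanRep κ m lam k).NontrivialRep :=
  have : Nonempty (Fin k) := ⟨⟨0, hk⟩⟩
  Or.inl ⟨0, inferInstanceAs (Nontrivial (Fin k → κ))⟩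

variable (e : QRep.Hom (jordanRep κ m lam k) (jordanRep κ m lam k))

theorem jordanRep_hom_fU_eq_fW_add_one (i : Fin m) :
    (e.fU i : Module.End κ (Fin k → κ)) = e.fW (i + 1) :=
  LinearMap.ext (e.commβ i)

theorem jordanRep_hom_fU_eq_fW {i : Fin m} (hi : i ≠ 0) :
    (e.fU i : Module.End κ (Fin k → κ)) = e.fW i :=
  LinearMap.ext fun x => by
    have h := e.commα i x
    rwa [show (jordanRep κ m lam k).α i = LinearMap.id from if_neg hi] at h

theorem jordanRep_hom_fW_eq_fW_zero (i : Fin m) :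
    (e.fW i : Module.End κ (Fin k → κ)) = e.fW 0 :=
  Fin.apply_eq_apply_zero_of_apply_add_one (α := Module.End κ (Fin k → κ)) (fun i => e.fW i)
    (fun i hi => (jordanRep_hom_fU_eq_fW_add_one e i).symm.trans (jordanRep_hom_fU_eq_fW e hi)) i

theorem jordanRep_hom_fU_eq_fW_zero (i : Fin m) :
    (e.fU i : Module.End κ (Fin k → κ)) = e.fW 0 :=
  (jordanRep_hom_fU_eq_fW_add_one e i).trans (jordanRep_hom_fW_eq_fW_zero e _)

theorem commute_jordanRep_hom_jordanShift :
    Commute (e.fW 0 : Module.End κ (Fin k → κ)) (jordanShift κ k) := by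
  have hJ : Commute (e.fW 0 : Module.End κ (Fin k → κ)) (jordanMatrix κ lam k).mulVecLin :=
    LinearMap.ext fun x => by
      have h := e.commα 0 x
      rw [show (jordanRep κ m lam k).α 0 = (jordanMatrix κ lam k).mulVecLin from rfl] at h
      exact (LinearMap.congr_fun (jordanRep_hom_fU_eq_fW_zero e 0) _).symm.trans h
  exact commute_jordanShift_of_commute_mulVecLin_jordanMatrix hJ

end jordanRep

theorem jordanRep_indecomposable_general {κ : Type} [Field κ] {m : ℕ} [NeZero m]
    (lam : κ) (k : ℕ) (hk : 1 ≤ k) :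
    (jordanRep κ m lam k).Indecomposable := by
  refine QRep.indecomposable_of_forall_isIdempotentElem (jordanRep_nontrivialRep hk)
    fun e he _ => ?_
  rcases (he 0).eq_zero_or_eq_one_of_commute_of_isNilpotent isNilpotent_jordanShift
    ⟨⟨_, ker_jordanShift hk⟩⟩ (commute_jordanRep_hom_jordanShift e) with h | h
  · exact Or.inl fun i => ⟨(jordanRep_hom_fW_eq_fW_zero e i).trans h,
      (jordanRep_hom_fU_eq_fW_zero e i).trans h⟩
  · exact Or.inr fun i => ⟨(jordanRep_hom_fW_eq_fW_zero e i).trans h,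
      (jordanRep_hom_fU_eq_fW_zero e i).trans h⟩

/-- For every `λ ≠ 0` and every `k ≥ 1`, the Jordan-cell representation
`ρ^J(λ,k)` of the cyclic quiver `G_{2m}` is indecomposable. -/
theorem jordanRep_indecomposable {κ : Type} [Field κ] {m : ℕ} [NeZero m]
    (lam : κ) (hlam : lam ≠ 0) (k : ℕ) (hk : 1 ≤ k) :
    (jordanRep κ m lam k).Indecomposable :=
  jordanRep_indecomposable_general lam k hk
end

section
/- Let ρ be a representation of the cyclic quiver G_{2m} and let k ≥ 0. If ρ admits no l′-chain for any 1 ≤ l′ ≤ k, then every collection of successive elements of length k+1 satisfying P1, P2 and P3 also satisfies P4; hence it is a (k+1)-chain. -/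
open Module

/-- A representation of the cyclic quiver `G_{2m}`, with the vertex data extended
`2m`-periodically over the integers. All vertex spaces are realized as submodules of a common
ambient vector space `E`; the map `α_i : V_{2i−1} → V_{2i}` (resp. `β_i : V_{2i+1} → V_{2i}`)
is recorded as the restriction to `V (2i−1)` (resp. `V (2i+1)`) of an ambient linear map
`A i` (resp. `B i`). -/
structure ZRep (κ : Type) [Field κ] (m : ℕ) (E : Type) [AddCommGroup E] [Module κ E] where
  V : ℤ → Submodule κ E
  A : ℤ → E →ₗ[κ] E
  B : ℤ → E →ₗ[κ] E
  Vper : ∀ j : ℤ, V (j + 2 * (m : ℤ)) = V j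
  Aper : ∀ (i : ℤ) (x : E), x ∈ V (2 * i - 1) → A (i + (m : ℤ)) x = A i x
  Bper : ∀ (i : ℤ) (x : E), x ∈ V (2 * i + 1) → B (i + (m : ℤ)) x = B i x
  Amap : ∀ (i : ℤ) (x : E), x ∈ V (2 * i - 1) → A i x ∈ V (2 * i)
  Bmap : ∀ (i : ℤ) (x : E), x ∈ V (2 * i + 1) → B i x ∈ V (2 * i)

namespace ZRep

variable {κ : Type} [Field κ] {m : ℕ} {E : Type} [AddCommGroup E] [Module κ E]

/-- A collection of successive elements of length `l`, starting at the integer index `p`,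
satisfying properties P1, P2 and P3: `h i ∈ V i` and `h i ≠ 0` for `p ≤ i ≤ p+l−1`;
(P1) `α_i (h (2i−1)) = h (2i)` and `β_i (h (2i+1)) = h (2i)` whenever the indices involved lie
in `[p, p+l−1]`; (P2) if `p = 2i` then `h p ∉ α_i (V (2i−1))`, and if `p = 2i+1` then
`β_i (h p) = 0`; (P3) if `p+l−1 = 2i` then `h (p+l−1) ∉ β_i (V (2i+1))`, and if
`p+l−1 = 2i−1` then `α_i (h (p+l−1)) = 0`. -/
def IsPreChain (ρ : ZRep κ m E) (p : ℤ) (l : ℕ) (h : ℤ → E) : Prop :=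
  1 ≤ l ∧
  (∀ j : ℤ, p ≤ j → j ≤ p + l - 1 → h j ∈ ρ.V j ∧ h j ≠ 0) ∧
  (∀ i : ℤ, p ≤ 2 * i - 1 → 2 * i ≤ p + l - 1 → ρ.A i (h (2 * i - 1)) = h (2 * i)) ∧
  (∀ i : ℤ, p ≤ 2 * i → 2 * i + 1 ≤ p + l - 1 → ρ.B i (h (2 * i + 1)) = h (2 * i)) ∧
  (∀ i : ℤ, p = 2 * i → h p ∉ ⇑(ρ.A i) '' (ρ.V (2 * i - 1) : Set E)) ∧
  (∀ i : ℤ, p = 2 * i + 1 → ρ.B i (h p) = 0) ∧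
  (∀ i : ℤ, p + l - 1 = 2 * i → h (p + l - 1) ∉ ⇑(ρ.B i) '' (ρ.V (2 * i + 1) : Set E)) ∧
  (∀ i : ℤ, p + l - 1 = 2 * i - 1 → ρ.A i (h (p + l - 1)) = 0)

/-- An `l`-chain: a collection of successive elements of length `l` satisfying P1, P2, P3 and,
in addition, (P4) for each vertex `j` the elements of the collection lying in `V j`
(i.e. those `h i` with `i ≡ j (mod 2m)`) are linearly independent. -/
def IsLChain (ρ : ZRep κ m E) (p : ℤ) (l : ℕ) (h : ℤ → E) : Prop :=
  IsPreChain ρ p l h ∧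
  ∀ j : ℤ, LinearIndependent κ
    (fun i : {i : ℤ // p ≤ i ∧ i ≤ p + l - 1 ∧ (2 * (m : ℤ)) ∣ (i - j)} => h i)

/-- `V^c j`: the span of the elements of the chain `h` lying in the vertex space `V j`. -/
def chainSpan (ρ : ZRep κ m E) (p : ℤ) (l : ℕ) (h : ℤ → E) (j : ℤ) : Submodule κ E :=
  Submodule.span κ {x | ∃ i : ℤ, p ≤ i ∧ i ≤ p + l - 1 ∧ (2 * (m : ℤ)) ∣ (i - j) ∧ x = h i}

end ZRep

/-!
By strong induction on `k`, a shorter pre-chain would already be a chain, so it suffices to show: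
if no pre-chain is shorter than the pre-chain `c` on `[p, K]`, then `c` satisfies (P4).
Take a relation `∑ a t • c t = 0` among indices congruent mod `2m`, with extreme indices `q ≤ r`.
Extend `c` by zero and put `g i = ∑ a t • c (i + (t - q))`. By `2m`-periodicity of the
representation, `g i ∈ V i`, `g` satisfies (P1) except near the translates of the ends `p` and `K`,
and `g q = 0`. If `p` is even, `g p ≡ a q • c p` modulo the image of `α`, so (P2) at `p` survives;
if `K` is even, likewise (P3) survives at `K - (r - q)`; if both are odd, `g` satisfies (P1)
everywhere and `g (p - (r - q)) = a r • c p ≠ 0` follows a zero. Cutting `g` at the zero nearest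
to that end yields a pre-chain of length at most `k`.
-/

lemma exists_first_zero {M : Type*} [Zero M] (f : ℤ → M) {u q : ℤ} (huq : u ≤ q) (hq : f q = 0) :
    ∃ z, u ≤ z ∧ z ≤ q ∧ f z = 0 ∧ ∀ i, u ≤ i → i < z → f i ≠ 0 := by
  obtain ⟨z, ⟨huz, hz⟩, hmin⟩ :=
    Int.exists_least_of_bdd (P := fun z => u ≤ z ∧ f z = 0) ⟨u, fun _ h => h.1⟩ ⟨q, huq, hq⟩
  exact ⟨z, huz, hmin q ⟨huq, hq⟩, hz, fun i hui hiz hi => (hmin i ⟨hui, hi⟩).not_gt hiz⟩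

lemma exists_last_zero {M : Type*} [Zero M] (f : ℤ → M) {q v : ℤ} (hqv : q ≤ v) (hq : f q = 0) :
    ∃ z, q ≤ z ∧ z ≤ v ∧ f z = 0 ∧ ∀ i, z < i → i ≤ v → f i ≠ 0 := by
  obtain ⟨z, ⟨hzv, hz⟩, hmax⟩ :=
    Int.exists_greatest_of_bdd (P := fun z => z ≤ v ∧ f z = 0) ⟨v, fun _ h => h.1⟩ ⟨q, hqv, hq⟩
  exact ⟨z, hmax q ⟨hqv, hq⟩, hzv, hz, fun i hzi hiv hi => (hmax i ⟨hiv, hi⟩).not_gt hzi⟩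

namespace ZRep

variable {κ : Type} [Field κ] {m : ℕ} {E : Type} [AddCommGroup E] [Module κ E] (ρ : ZRep κ m E)

lemma V_eq_of_dvd {i j : ℤ} (h : 2 * (m : ℤ) ∣ j - i) : ρ.V j = ρ.V i := by
  obtain ⟨e, he⟩ := h
  simpa [show j = i + e * (2 * m) by linarith] using Function.Periodic.int_mul ρ.Vper e i

lemma A_eq_of_dvd {i j : ℤ} (h : (m : ℤ) ∣ j - i) {x : E} (hx : x ∈ ρ.V (2 * i - 1)) :
    ρ.A j x = ρ.A i x := by
  classical
  have hper : Function.Periodic (fun i => if x ∈ ρ.V (2 * i - 1) then ρ.A i x else 0) (m : ℤ) := by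
    intro i
    simp only [show 2 * (i + m) - 1 = 2 * i - 1 + 2 * m by ring, ρ.Vper]
    split_ifs with hxi
    exacts [ρ.Aper i x hxi, rfl]
  obtain ⟨e, rfl⟩ : ∃ e, j = i + e * m := by obtain ⟨e, he⟩ := h; exact ⟨e, by linarith⟩
  have hV : ρ.V (2 * (i + e * m) - 1) = ρ.V (2 * i - 1) := ρ.V_eq_of_dvd ⟨e, by ring⟩
  simpa [hx, hV] using (hper.int_mul e) i

lemma B_eq_of_dvd {i j : ℤ} (h : (m : ℤ) ∣ j - i) {x : E} (hx : x ∈ ρ.V (2 * i + 1)) :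
    ρ.B j x = ρ.B i x := by
  classical
  have hper : Function.Periodic (fun i => if x ∈ ρ.V (2 * i + 1) then ρ.B i x else 0) (m : ℤ) := by
    intro i
    simp only [show 2 * (i + m) + 1 = 2 * i + 1 + 2 * m by ring, ρ.Vper]
    split_ifs with hxi
    exacts [ρ.Bper i x hxi, rfl]
  obtain ⟨e, rfl⟩ : ∃ e, j = i + e * m := by obtain ⟨e, he⟩ := h; exact ⟨e, by linarith⟩
  have hV : ρ.V (2 * (i + e * m) + 1) = ρ.V (2 * i + 1) := ρ.V_eq_of_dvd ⟨e, by ring⟩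
  simpa [hx, hV] using (hper.int_mul e) i

lemma map_A_eq_of_dvd {i j : ℤ} (h : (m : ℤ) ∣ j - i) :
    (ρ.V (2 * j - 1)).map (ρ.A j) = (ρ.V (2 * i - 1)).map (ρ.A i) := by
  obtain ⟨e, he⟩ := h
  rw [ρ.V_eq_of_dvd (i := 2 * i - 1) ⟨e, by linarith⟩]
  ext x
  simp only [Submodule.mem_map]
  exact exists_congr fun y => and_congr_right fun hy => by rw [ρ.A_eq_of_dvd ⟨e, he⟩ hy]

lemma map_B_eq_of_dvd {i j : ℤ} (h : (m : ℤ) ∣ j - i) :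
    (ρ.V (2 * j + 1)).map (ρ.B j) = (ρ.V (2 * i + 1)).map (ρ.B i) := by
  obtain ⟨e, he⟩ := h
  rw [ρ.V_eq_of_dvd (i := 2 * i + 1) ⟨e, by linarith⟩]
  ext x
  simp only [Submodule.mem_map]
  exact exists_congr fun y => and_congr_right fun hy => by rw [ρ.B_eq_of_dvd ⟨e, he⟩ hy]

def AStep (f : ℤ → E) (i : ℤ) : Prop := ρ.A i (f (2 * i - 1)) = f (2 * i)

def BStep (f : ℤ → E) (i : ℤ) : Prop := ρ.B i (f (2 * i + 1)) = f (2 * i)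

/-- Condition (P2) at a start index `u`. -/
def IsLeftEnd (f : ℤ → E) (u : ℤ) : Prop :=
  (∀ i : ℤ, u = 2 * i → f u ∉ ⇑(ρ.A i) '' (ρ.V (2 * i - 1) : Set E)) ∧
  (∀ i : ℤ, u = 2 * i + 1 → ρ.B i (f u) = 0)

/-- Condition (P3) at an end index `v`. -/
def IsRightEnd (f : ℤ → E) (v : ℤ) : Prop :=
  (∀ i : ℤ, v = 2 * i → f v ∉ ⇑(ρ.B i) '' (ρ.V (2 * i + 1) : Set E)) ∧
  (∀ i : ℤ, v = 2 * i - 1 → ρ.A i (f v) = 0)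

variable {ρ}

lemma AStep.apply_eq_of_dvd {f : ℤ → E} (hf : ∀ i, f i ∈ ρ.V i) {i j : ℤ}
    (hij : (m : ℤ) ∣ j - i) (h : ρ.AStep f j) : ρ.A i (f (2 * j - 1)) = f (2 * j) := by
  obtain ⟨e, he⟩ := hij
  have hV : ρ.V (2 * j - 1) = ρ.V (2 * i - 1) := ρ.V_eq_of_dvd ⟨e, by linarith⟩
  rw [← h, ρ.A_eq_of_dvd ⟨e, he⟩ (hV ▸ hf _)]

lemma AStep.mem_map_of_dvd {f : ℤ → E} (hf : ∀ i, f i ∈ ρ.V i) {i j : ℤ}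
    (hij : (m : ℤ) ∣ j - i) (h : ρ.AStep f j) : f (2 * j) ∈ (ρ.V (2 * i - 1)).map (ρ.A i) :=
  ρ.map_A_eq_of_dvd hij ▸ h ▸ Submodule.mem_map_of_mem (hf _)

lemma BStep.apply_eq_of_dvd {f : ℤ → E} (hf : ∀ i, f i ∈ ρ.V i) {i j : ℤ}
    (hij : (m : ℤ) ∣ j - i) (h : ρ.BStep f j) : ρ.B i (f (2 * j + 1)) = f (2 * j) := by
  obtain ⟨e, he⟩ := hij
  have hV : ρ.V (2 * j + 1) = ρ.V (2 * i + 1) := ρ.V_eq_of_dvd ⟨e, by linarith⟩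
  rw [← h, ρ.B_eq_of_dvd ⟨e, he⟩ (hV ▸ hf _)]

lemma BStep.mem_map_of_dvd {f : ℤ → E} (hf : ∀ i, f i ∈ ρ.V i) {i j : ℤ}
    (hij : (m : ℤ) ∣ j - i) (h : ρ.BStep f j) : f (2 * j) ∈ (ρ.V (2 * i + 1)).map (ρ.B i) :=
  ρ.map_B_eq_of_dvd hij ▸ h ▸ Submodule.mem_map_of_mem (hf _)

lemma isPreChain_of_Icc {f : ℤ → E} {u v : ℤ} (huv : u ≤ v) (hf : ∀ i, f i ∈ ρ.V i)
    (hne : ∀ i, u ≤ i → i ≤ v → f i ≠ 0)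
    (hA : ∀ i, u ≤ 2 * i - 1 → 2 * i ≤ v → ρ.AStep f i)
    (hB : ∀ i, u ≤ 2 * i → 2 * i + 1 ≤ v → ρ.BStep f i)
    (hu : ρ.IsLeftEnd f u) (hv : ρ.IsRightEnd f v) :
    ρ.IsPreChain u (v - u + 1).toNat f := by
  have hlast : u + ((v - u + 1).toNat : ℤ) - 1 = v := by omega
  refine ⟨by omega, fun i h1 h2 => ⟨hf i, hne i h1 (by omega)⟩, fun i h1 h2 => hA i h1 (by omega),
    fun i h1 h2 => hB i h1 (by omega), hu.1, hu.2, ?_, ?_⟩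
  · rw [hlast]; exact hv.1
  · rw [hlast]; exact hv.2

lemma isLeftEnd_of_pred_eq_zero {f : ℤ → E} {u : ℤ} (hfu : f u ≠ 0) (h0 : f (u - 1) = 0)
    (hA : ∀ i, u = 2 * i → ρ.AStep f i) (hB : ∀ i, u = 2 * i + 1 → ρ.BStep f i) :
    ρ.IsLeftEnd f u := by
  refine ⟨fun i hi _ => hfu ?_, fun i hi => ?_⟩
  · have h := hA i hi
    rw [AStep, ← hi, h0, map_zero] at h
    exact h.symm
  · have h := hB i hi
    rwa [BStep, ← hi, show 2 * i = u - 1 by omega, h0] at h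

lemma isRightEnd_of_succ_eq_zero {f : ℤ → E} {v : ℤ} (hfv : f v ≠ 0) (h0 : f (v + 1) = 0)
    (hA : ∀ i, v + 1 = 2 * i → ρ.AStep f i) (hB : ∀ i, v = 2 * i → ρ.BStep f i) :
    ρ.IsRightEnd f v := by
  refine ⟨fun i hi _ => hfv ?_, fun i hi => ?_⟩
  · have h := hB i hi
    rw [BStep, ← hi, h0, map_zero] at h
    exact h.symm
  · have h := hA i (by omega)
    rwa [AStep, ← hi, show 2 * i = v + 1 by omega, h0] at h

lemma exists_isPreChain_of_isLeftEnd {f : ℤ → E} {u q : ℤ} (hf : ∀ i, f i ∈ ρ.V i)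
    (hu : ρ.IsLeftEnd f u) (hfu : f u ≠ 0) (hq : f q = 0) (huq : u ≤ q)
    (hA : ∀ i, u < 2 * i → 2 * i ≤ q → ρ.AStep f i)
    (hB : ∀ i, u ≤ 2 * i → 2 * i < q → ρ.BStep f i) :
    ∃ l : ℕ, (l : ℤ) ≤ q - u ∧ ρ.IsPreChain u l f := by
  obtain ⟨z, huz, hzq, hz, hne⟩ := exists_first_zero f huq hq
  have huz : u < z := lt_of_le_of_ne huz fun h => hfu (h ▸ hz)
  refine ⟨(z - 1 - u + 1).toNat, by omega, isPreChain_of_Icc (by omega) hf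
    (fun i h1 h2 => hne i h1 (by omega)) (fun i h1 h2 => hA i (by omega) (by omega))
    (fun i h1 h2 => hB i h1 (by omega)) hu ?_⟩
  exact isRightEnd_of_succ_eq_zero (hne _ (by omega) (by omega)) (by rwa [sub_add_cancel])
    (fun i hi => hA i (by omega) (by omega)) (fun i hi => hB i (by omega) (by omega))

lemma exists_isPreChain_of_isRightEnd {f : ℤ → E} {q v : ℤ} (hf : ∀ i, f i ∈ ρ.V i)
    (hv : ρ.IsRightEnd f v) (hfv : f v ≠ 0) (hq : f q = 0) (hqv : q ≤ v)
    (hA : ∀ i, q < 2 * i → 2 * i ≤ v → ρ.AStep f i)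
    (hB : ∀ i, q ≤ 2 * i → 2 * i < v → ρ.BStep f i) :
    ∃ u : ℤ, ∃ l : ℕ, (l : ℤ) ≤ v - q ∧ ρ.IsPreChain u l f := by
  obtain ⟨z, hqz, hzv, hz, hne⟩ := exists_last_zero f hqv hq
  have hzv : z < v := lt_of_le_of_ne hzv fun h => hfv (h ▸ hz)
  refine ⟨z + 1, (v - (z + 1) + 1).toNat, by omega, isPreChain_of_Icc (by omega) hf
    (fun i h1 h2 => hne i (by omega) h2) (fun i h1 h2 => hA i (by omega) h2)
    (fun i h1 h2 => hB i (by omega) (by omega)) ?_ hv⟩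
  exact isLeftEnd_of_pred_eq_zero (hne _ (by omega) (by omega)) (by rwa [add_sub_cancel_right])
    (fun i hi => hA i (by omega) (by omega)) (fun i hi => hB i (by omega) (by omega))

section Extension

variable {c : ℤ → E} {p : ℤ} {l : ℕ}

lemma IsPreChain.indicator_mem (hc : ρ.IsPreChain p l c) (i : ℤ) :
    (Set.Icc p (p + l - 1)).indicator c i ∈ ρ.V i := by
  by_cases hi : i ∈ Set.Icc p (p + l - 1)
  · obtain ⟨-, hmem, -⟩ := hc
    rw [Set.indicator_of_mem hi]; exact (hmem i hi.1 hi.2).1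
  · rw [Set.indicator_of_notMem hi]; exact zero_mem _

lemma IsPreChain.aStep_indicator (hc : ρ.IsPreChain p l c) {i : ℤ} (hi : 2 * i ≠ p) :
    ρ.AStep ((Set.Icc p (p + l - 1)).indicator c) i := by
  obtain ⟨-, -, hA, -, -, -, -, hend⟩ := hc
  simp only [AStep, Set.indicator_apply, Set.mem_Icc]
  split_ifs with h1 h2 h2
  · exact hA i h1.1 h2.2
  · have hK : p + l - 1 = 2 * i - 1 := by omega
    simpa [hK] using hend i hK
  · omega
  · exact map_zero _

lemma IsPreChain.bStep_indicator (hc : ρ.IsPreChain p l c) {i : ℤ} (hi : 2 * i ≠ p + l - 1) :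
    ρ.BStep ((Set.Icc p (p + l - 1)).indicator c) i := by
  obtain ⟨-, -, -, hB, -, hstart, -, -⟩ := hc
  simp only [BStep, Set.indicator_apply, Set.mem_Icc]
  split_ifs with h1 h2 h2
  · exact hB i h2.1 h1.2
  · have hp : p = 2 * i + 1 := by omega
    simpa [hp] using hstart i hp
  · omega
  · exact map_zero _

end Extension

def shiftedComb (a : ℤ →₀ κ) (f : ℤ → E) (q i : ℤ) : E := ∑ t ∈ a.support, a t • f (i + (t - q))

section ShiftedComb

variable {a : ℤ →₀ κ} {f : ℤ → E} {q : ℤ}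

lemma shiftedComb_mem (hf : ∀ i, f i ∈ ρ.V i) (hdvd : ∀ t ∈ a.support, 2 * (m : ℤ) ∣ t - q)
    (i : ℤ) : shiftedComb a f q i ∈ ρ.V i :=
  Submodule.sum_mem _ fun t ht => Submodule.smul_mem _ _ <|
    ρ.V_eq_of_dvd (i := i) (j := i + (t - q)) (by simpa using hdvd t ht) ▸ hf _

lemma aStep_shiftedComb (hf : ∀ i, f i ∈ ρ.V i) (hdvd : ∀ t ∈ a.support, 2 * (m : ℤ) ∣ t - q)
    {i : ℤ} (h : ∀ t ∈ a.support, ∀ j, 2 * j = 2 * i + (t - q) → ρ.AStep f j) :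
    ρ.AStep (shiftedComb a f q) i := by
  simp only [AStep, shiftedComb, map_sum, map_smul]
  refine Finset.sum_congr rfl fun t ht => ?_
  obtain ⟨e, he⟩ := hdvd t ht
  have hj : 2 * (i + m * e) = 2 * i + (t - q) := by rw [he]; ring
  rw [show 2 * i - 1 + (t - q) = 2 * (i + m * e) - 1 by omega, ← hj,
    (h t ht _ hj).apply_eq_of_dvd hf ⟨e, by ring⟩]

lemma bStep_shiftedComb (hf : ∀ i, f i ∈ ρ.V i) (hdvd : ∀ t ∈ a.support, 2 * (m : ℤ) ∣ t - q)
    {i : ℤ} (h : ∀ t ∈ a.support, ∀ j, 2 * j = 2 * i + (t - q) → ρ.BStep f j) :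
    ρ.BStep (shiftedComb a f q) i := by
  simp only [BStep, shiftedComb, map_sum, map_smul]
  refine Finset.sum_congr rfl fun t ht => ?_
  obtain ⟨e, he⟩ := hdvd t ht
  have hj : 2 * (i + m * e) = 2 * i + (t - q) := by rw [he]; ring
  rw [show 2 * i + 1 + (t - q) = 2 * (i + m * e) + 1 by omega, ← hj,
    (h t ht _ hj).apply_eq_of_dvd hf ⟨e, by ring⟩]

lemma mem_map_A_of_shiftedComb_mem (hf : ∀ i, f i ∈ ρ.V i)
    (hdvd : ∀ t ∈ a.support, 2 * (m : ℤ) ∣ t - q) (hq : q ∈ a.support)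
    (hqle : ∀ t ∈ a.support, q ≤ t) {i : ℤ} (hA : ∀ j, i < j → ρ.AStep f j)
    (h : shiftedComb a f q (2 * i) ∈ (ρ.V (2 * i - 1)).map (ρ.A i)) :
    f (2 * i) ∈ (ρ.V (2 * i - 1)).map (ρ.A i) := by
  classical
  have hrest : ∑ t ∈ a.support.erase q, a t • f (2 * i + (t - q)) ∈
      (ρ.V (2 * i - 1)).map (ρ.A i) := by
    refine Submodule.sum_mem _ fun t ht => Submodule.smul_mem _ _ ?_
    obtain ⟨htq, ht⟩ := Finset.mem_erase.mp ht
    obtain ⟨e, he⟩ := hdvd t ht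
    have hj : 2 * (i + m * e) = 2 * i + (t - q) := by rw [he]; ring
    have hlt : i < i + m * e := by have := hqle t ht; omega
    exact hj ▸ (hA _ hlt).mem_map_of_dvd hf ⟨e, by ring⟩
  rw [shiftedComb, ← Finset.add_sum_erase _ _ hq, sub_self, add_zero] at h
  exact (Submodule.smul_mem_iff _ (Finsupp.mem_support_iff.mp hq)).mp
    ((Submodule.add_mem_iff_left _ hrest).mp h)

lemma mem_map_B_of_shiftedComb_mem (hf : ∀ i, f i ∈ ρ.V i)
    (hdvd : ∀ t ∈ a.support, 2 * (m : ℤ) ∣ t - q) {r : ℤ} (hr : r ∈ a.support)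
    (hler : ∀ t ∈ a.support, t ≤ r) {i j : ℤ} (hij : 2 * i + (r - q) = 2 * j)
    (hB : ∀ j', j' < j → ρ.BStep f j')
    (h : shiftedComb a f q (2 * i) ∈ (ρ.V (2 * i + 1)).map (ρ.B i)) :
    f (2 * j) ∈ (ρ.V (2 * j + 1)).map (ρ.B j) := by
  classical
  have hrest : ∑ t ∈ a.support.erase r, a t • f (2 * i + (t - q)) ∈
      (ρ.V (2 * i + 1)).map (ρ.B i) := by
    refine Submodule.sum_mem _ fun t ht => Submodule.smul_mem _ _ ?_
    obtain ⟨htr, ht⟩ := Finset.mem_erase.mp ht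
    obtain ⟨e, he⟩ := hdvd t ht
    have hj : 2 * (i + m * e) = 2 * i + (t - q) := by rw [he]; ring
    have hlt : i + m * e < j := by have := hler t ht; omega
    exact hj ▸ (hB _ hlt).mem_map_of_dvd hf ⟨e, by ring⟩
  rw [shiftedComb, ← Finset.add_sum_erase _ _ hr, hij] at h
  obtain ⟨e, he⟩ := hdvd r hr
  rw [ρ.map_B_eq_of_dvd (i := i) ⟨e, by linarith⟩]
  exact (Submodule.smul_mem_iff _ (Finsupp.mem_support_iff.mp hr)).mp
    ((Submodule.add_mem_iff_left _ hrest).mp h)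

end ShiftedComb

lemma IsLeftEnd.ne_zero {f : ℤ → E} {u i : ℤ} (hu : ρ.IsLeftEnd f u) (hi : u = 2 * i) :
    f u ≠ 0 := fun h0 => hu.1 i hi ⟨0, zero_mem _, by rw [map_zero, h0]⟩

lemma IsRightEnd.ne_zero {f : ℤ → E} {v i : ℤ} (hv : ρ.IsRightEnd f v) (hi : v = 2 * i) :
    f v ≠ 0 := fun h0 => hv.1 i hi ⟨0, zero_mem _, by rw [map_zero, h0]⟩

section Relation

variable {c : ℤ → E} {p : ℤ} {l : ℕ} {a : ℤ →₀ κ} {q r : ℤ}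

lemma shiftedComb_indicator_self (hsupp : ∀ t ∈ a.support, p ≤ t ∧ t ≤ p + l - 1) :
    shiftedComb a ((Set.Icc p (p + l - 1)).indicator c) q q = ∑ t ∈ a.support, a t • c t :=
  Finset.sum_congr rfl fun t ht => by
    rw [add_sub_cancel, Set.indicator_of_mem (Set.mem_Icc.mpr (hsupp t ht))]

lemma shiftedComb_indicator_eq_zero_of_lt (hler : ∀ t ∈ a.support, t ≤ r) {i : ℤ}
    (hi : i < p - (r - q)) : shiftedComb a ((Set.Icc p (p + l - 1)).indicator c) q i = 0 :=
  Finset.sum_eq_zero fun t ht => by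
    rw [Set.indicator_of_notMem (fun h => by have := hler t ht; rw [Set.mem_Icc] at h; omega),
      smul_zero]

lemma IsPreChain.shiftedComb_indicator_sub (hc : ρ.IsPreChain p l c) (hr : r ∈ a.support)
    (hler : ∀ t ∈ a.support, t ≤ r) :
    shiftedComb a ((Set.Icc p (p + l - 1)).indicator c) q (p - (r - q)) = a r • c p := by
  have hp : p ∈ Set.Icc p (p + l - 1) := Set.mem_Icc.mpr ⟨le_rfl, by have := hc.1; omega⟩
  refine (Finset.sum_eq_single r (fun t ht htr => ?_) (absurd hr)).trans ?_
  · rw [Set.indicator_of_notMem (fun h => by have := hler t ht; rw [Set.mem_Icc] at h; omega),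
      smul_zero]
  · rw [show p - (r - q) + (r - q) = p by ring, Set.indicator_of_mem hp]

lemma IsPreChain.aStep_shiftedComb_indicator (hc : ρ.IsPreChain p l c)
    (hdvd : ∀ t ∈ a.support, 2 * (m : ℤ) ∣ t - q) (hqle : ∀ t ∈ a.support, q ≤ t) {i : ℤ}
    (hi : p < 2 * i ∨ ∀ j, p ≠ 2 * j) :
    ρ.AStep (shiftedComb a ((Set.Icc p (p + l - 1)).indicator c) q) i := by
  refine aStep_shiftedComb hc.indicator_mem hdvd fun t ht j hj => hc.aStep_indicator ?_
  obtain ⟨e, he⟩ := hdvd t ht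
  have := hqle t ht
  rcases hi with hi | hi
  · omega
  · exact fun h => hi (i + m * e) (by rw [← h, hj, he]; ring)

lemma IsPreChain.bStep_shiftedComb_indicator (hc : ρ.IsPreChain p l c)
    (hdvd : ∀ t ∈ a.support, 2 * (m : ℤ) ∣ t - q) (hler : ∀ t ∈ a.support, t ≤ r) {i : ℤ}
    (hi : 2 * i + (r - q) < p + l - 1 ∨ ∀ j, p + l - 1 ≠ 2 * j) :
    ρ.BStep (shiftedComb a ((Set.Icc p (p + l - 1)).indicator c) q) i := by
  refine bStep_shiftedComb hc.indicator_mem hdvd fun t ht j hj => hc.bStep_indicator ?_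
  obtain ⟨e, he⟩ := hdvd t ht
  have := hler t ht
  rcases hi with hi | hi
  · omega
  · exact fun h => hi (i + m * e) (by rw [← h, hj, he]; ring)

lemma IsPreChain.isLeftEnd_shiftedComb_indicator (hc : ρ.IsPreChain p l c)
    (hdvd : ∀ t ∈ a.support, 2 * (m : ℤ) ∣ t - q) (hq : q ∈ a.support)
    (hqle : ∀ t ∈ a.support, q ≤ t) {ip : ℤ} (hp : p = 2 * ip) :
    ρ.IsLeftEnd (shiftedComb a ((Set.Icc p (p + l - 1)).indicator c) q) p := by
  subst hp
  have hcp := mem_map_A_of_shiftedComb_mem hc.indicator_mem hdvd hq hqle (i := ip)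
    (fun j hj => hc.aStep_indicator (by omega))
  obtain ⟨hl, -, -, -, hstart, -⟩ := hc
  rw [Set.indicator_of_mem (Set.mem_Icc.mpr ⟨le_rfl, by omega⟩)] at hcp
  refine ⟨fun i hi h => hstart i hi ?_, fun i hi => by omega⟩
  obtain rfl : i = ip := by omega
  rw [← Submodule.map_coe, SetLike.mem_coe] at h ⊢
  exact hcp h

lemma IsPreChain.isRightEnd_shiftedComb_indicator (hc : ρ.IsPreChain p l c)
    (hdvd : ∀ t ∈ a.support, 2 * (m : ℤ) ∣ t - q) (hr : r ∈ a.support)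
    (hler : ∀ t ∈ a.support, t ≤ r) {iK : ℤ} (hK : p + l - 1 = 2 * iK) :
    ρ.IsRightEnd (shiftedComb a ((Set.Icc p (p + l - 1)).indicator c) q)
      (p + l - 1 - (r - q)) := by
  obtain ⟨e, he⟩ := hdvd r hr
  have hw : r - q = 2 * (m * e) := by rw [he]; ring
  have hcK := fun i (hi : p + l - 1 - (r - q) = 2 * i) =>
    mem_map_B_of_shiftedComb_mem hc.indicator_mem hdvd hr hler (i := i) (j := iK) (by omega)
      (fun j hj => hc.bStep_indicator (by omega))
  obtain ⟨hl, -, -, -, -, -, hend, -⟩ := hc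
  rw [Set.indicator_of_mem (Set.mem_Icc.mpr ⟨by omega, by omega⟩)] at hcK
  refine ⟨fun i hi h => hend iK hK ?_, fun i hi => by omega⟩
  rw [← Submodule.map_coe, SetLike.mem_coe, hi] at h
  rw [← Submodule.map_coe, SetLike.mem_coe, hK]
  exact hcK i hi h

end Relation

theorem IsPreChain.exists_shorter_of_relation {c : ℤ → E} {p : ℤ} {l : ℕ}
    (hc : ρ.IsPreChain p l c) {a : ℤ →₀ κ} {q r : ℤ} (hq : q ∈ a.support) (hr : r ∈ a.support)
    (hqle : ∀ t ∈ a.support, q ≤ t) (hler : ∀ t ∈ a.support, t ≤ r) (hpq : p ≤ q)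
    (hrK : r ≤ p + l - 1) (hdvd : ∀ t ∈ a.support, 2 * (m : ℤ) ∣ t - q)
    (hsum : ∑ t ∈ a.support, a t • c t = 0) :
    ∃ (u : ℤ) (l' : ℕ) (g : ℤ → E), l' < l ∧ ρ.IsPreChain u l' g := by
  set g := shiftedComb a ((Set.Icc p (p + l - 1)).indicator c) q
  have hl := hc.1
  have hqr := hqle r hr
  have hgV := shiftedComb_mem hc.indicator_mem hdvd
  have hgq : g q = 0 := (shiftedComb_indicator_self fun t ht =>
    ⟨hpq.trans (hqle t ht), (hler t ht).trans hrK⟩).trans hsum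
  have hgA := fun i => hc.aStep_shiftedComb_indicator hdvd hqle (i := i)
  have hgB := fun i => hc.bStep_shiftedComb_indicator hdvd hler (i := i)
  rcases Int.even_or_odd' p with ⟨ip, hp | hp⟩
  · have hgp := hc.isLeftEnd_shiftedComb_indicator hdvd hq hqle hp
    obtain ⟨l', hl', hg⟩ := exists_isPreChain_of_isLeftEnd hgV hgp (hgp.ne_zero hp) hgq hpq
      (fun i hi _ => hgA i (.inl hi)) (fun i _ hi => hgB i (.inl (by omega)))
    exact ⟨p, l', g, by omega, hg⟩
  rcases Int.even_or_odd' (p + l - 1) with ⟨iK, hK | hK⟩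
  · have hgv := hc.isRightEnd_shiftedComb_indicator hdvd hr hler hK
    obtain ⟨e, he⟩ := hdvd r hr
    obtain ⟨u, l', hl', hg⟩ := exists_isPreChain_of_isRightEnd hgV hgv
      (hgv.ne_zero (i := iK - m * e) (by rw [hK, he]; ring)) hgq (by omega)
      (fun i hi _ => hgA i (.inl (by omega))) (fun i _ hi => hgB i (.inl (by omega)))
    exact ⟨u, l', g, by omega, hg⟩
  · have hgA' := fun i => hgA i (.inr fun j => by omega)
    have hgB' := fun i => hgB i (.inr fun j => by omega)
    have hne : g (p - (r - q)) ≠ 0 := by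
      rw [show g (p - (r - q)) = a r • c p from hc.shiftedComb_indicator_sub hr hler]
      exact smul_ne_zero (Finsupp.mem_support_iff.mp hr) (hc.2.1 p le_rfl (by omega)).2
    obtain ⟨l', hl', hg⟩ := exists_isPreChain_of_isLeftEnd hgV
      (isLeftEnd_of_pred_eq_zero hne (shiftedComb_indicator_eq_zero_of_lt hler (by omega))
        (fun i _ => hgA' i) (fun i _ => hgB' i))
      hne hgq (by omega) (fun i _ _ => hgA' i) (fun i _ _ => hgB' i)
    exact ⟨p - (r - q), l', g, by omega, hg⟩

theorem IsPreChain.linearIndependent_of_no_shorter {c : ℤ → E} {p : ℤ} {l : ℕ}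
    (hc : ρ.IsPreChain p l c)
    (hshort : ∀ (u : ℤ) (l' : ℕ) (g : ℤ → E), l' < l → ¬ ρ.IsPreChain u l' g) (j : ℤ) :
    LinearIndependent κ
      (fun i : {i : ℤ // p ≤ i ∧ i ≤ p + l - 1 ∧ (2 * (m : ℤ)) ∣ (i - j)} => c i) := by
  change LinearIndepOn κ c {i | p ≤ i ∧ i ≤ p + l - 1 ∧ (2 * (m : ℤ)) ∣ (i - j)}
  rw [linearIndepOn_iff]
  intro a ha hsum
  by_contra ha0
  have hne : a.support.Nonempty := Finsupp.support_nonempty_iff.mpr ha0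
  have hsupp := (Finsupp.mem_supported κ a).mp ha
  have hq := hsupp (a.support.min'_mem hne)
  have hr := hsupp (a.support.max'_mem hne)
  obtain ⟨u, l', g, hl', hg⟩ := hc.exists_shorter_of_relation (a.support.min'_mem hne)
    (a.support.max'_mem hne) a.support.min'_le a.support.le_max' hq.1 hr.2.1
    (fun t ht => sub_sub_sub_cancel_right t _ j ▸ dvd_sub (hsupp ht).2.2 hq.2.2) hsum
  exact hshort u l' g hl' hg

end ZRep

theorem preChain_isChain_of_no_shorter_chain_general {κ : Type} [Field κ] {m : ℕ}
    {E : Type} [AddCommGroup E] [Module κ E]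
    (ρ : ZRep κ m E) (k : ℕ)
    (hno : ∀ l', 1 ≤ l' → l' ≤ k → ∀ (p : ℤ) (c : ℤ → E), ¬ ρ.IsLChain p l' c) :
    ∀ (p : ℤ) (c : ℤ → E), ρ.IsPreChain p (k + 1) c → ρ.IsLChain p (k + 1) c := by
  induction k using Nat.strong_induction_on with
  | _ k IH =>
  intro p c hc
  refine ⟨hc, hc.linearIndependent_of_no_shorter fun u l' g hl' hg => ?_⟩
  obtain ⟨n, rfl⟩ : ∃ n, l' = n + 1 := ⟨l' - 1, by have := hg.1; omega⟩
  exact hno (n + 1) (by omega) (by omega) u g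
    (IH n (by omega) (fun l'' h1 h2 => hno l'' h1 (by omega)) u g hg)

/-- If a representation of `G_{2m}` admits no `l′`-chain for any
`1 ≤ l′ ≤ k`, then every collection of successive elements of length `k+1` satisfying
P1, P2 and P3 also satisfies P4, i.e. it is a `(k+1)`-chain. -/
theorem preChain_isChain_of_no_shorter_chain {κ : Type} [Field κ] {m : ℕ} [NeZero m]
    {E : Type} [AddCommGroup E] [Module κ E]
    (ρ : ZRep κ m E) (hfd : ∀ j : ℤ, FiniteDimensional κ (ρ.V j)) (k : ℕ)
    (hno : ∀ l', 1 ≤ l' → l' ≤ k → ∀ (p : ℤ) (c : ℤ → E), ¬ ρ.IsLChain p l' c) :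
    ∀ (p : ℤ) (c : ℤ → E), ρ.IsPreChain p (k + 1) c → ρ.IsLChain p (k + 1) c :=
  preChain_isChain_of_no_shorter_chain_general ρ k hno
end
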